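/- arXiv:2105.14856 — 4 statements merged into one kernel-verified Lean document; each statement's English description precedes it below -/
import Mathlib

section
/- Let G be a finite graph and L a list assignment with |L(v)| ≥ deg(v) for every vertex v. If G is connected and some vertex v satisfies |L(v)| > deg(v), then G admits a proper L-coloring. -/
/-!
Colour greedily, vertices farther from `v` first. A vertex `u ≠ v` has a neighbour closer to `v`,
which is coloured after `u`, so when `u` is coloured fewer than `deg u ≤ |L u|` colours are
blocked; when `v` is coloured last, at most `deg v < |L v|` colours are blocked.
-/

open Finset

namespace SimpleGraph

variable {V α : Type*} (G : SimpleGraph V)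

/-- If every colour of `L u` is used by a neighbour of smaller rank, the value at `u` is
arbitrary. -/
noncomputable def greedyListColoring [Nonempty α] (L : V → Finset α) (r : V → ℕ) (u : V) : α :=
  Classical.epsilon fun c =>
    c ∈ L u ∧ ∀ w, G.Adj u w → (_ : r w < r u) → greedyListColoring L r w ≠ c
termination_by r u

section Greedy

variable [G.LocallyFinite] [Nonempty α] {L : V → Finset α} {r : V → ℕ}

theorem greedyListColoring_spec
    (hL : ∀ u, #{w ∈ G.neighborFinset u | r w < r u} < #(L u)) (u : V) :
    G.greedyListColoring L r u ∈ L u ∧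
      ∀ w, G.Adj u w → r w < r u → G.greedyListColoring L r w ≠ G.greedyListColoring L r u := by
  classical
  obtain ⟨c, hc, hc_free⟩ := exists_mem_notMem_of_card_lt_card
    (card_image_le.trans_lt (hL u) :
      #({w ∈ G.neighborFinset u | r w < r u}.image (G.greedyListColoring L r)) < #(L u))
  rw [greedyListColoring]
  refine Classical.epsilon_spec (p := fun c => c ∈ L u ∧ ∀ w, G.Adj u w → r w < r u →
    G.greedyListColoring L r w ≠ c) ⟨c, hc, fun w hadj hlt hwc => hc_free ?_⟩
  exact mem_image.2 ⟨w, mem_filter.2 ⟨(G.mem_neighborFinset u w).2 hadj, hlt⟩, hwc⟩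

theorem greedyListColoring_adj_ne (hr : ∀ u w, G.Adj u w → r u ≠ r w)
    (hL : ∀ u, #{w ∈ G.neighborFinset u | r w < r u} < #(L u)) {u w : V} (h : G.Adj u w) :
    G.greedyListColoring L r u ≠ G.greedyListColoring L r w := by
  rcases (hr u w h).lt_or_gt with hlt | hlt
  · exact (G.greedyListColoring_spec hL w).2 u h.symm hlt
  · exact ((G.greedyListColoring_spec hL u).2 w h hlt).symm

theorem card_filter_neighborFinset_lt_degree {p : V → Prop} [DecidablePred p] {u w : V}
    (h : G.Adj u w) (hw : ¬p w) : #{x ∈ G.neighborFinset u | p x} < G.degree u := by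
  rw [← card_neighborFinset_eq_degree]
  exact card_lt_card (filter_ssubset.2 ⟨w, (G.mem_neighborFinset u w).2 h, hw⟩)

end Greedy

variable {G} {u v : V}

theorem Reachable.dist_lt_card [Fintype V] (h : G.Reachable u v) :
    G.dist u v < Fintype.card V := by
  obtain ⟨p, hp, hlen⟩ := h.exists_path_of_dist
  exact hlen ▸ hp.length_lt

theorem Reachable.exists_adj_dist_lt (h : G.Reachable u v) (huv : u ≠ v) :
    ∃ w, G.Adj u w ∧ G.dist w v < G.dist u v := by
  obtain ⟨p, hp⟩ := h.exists_walk_length_eq_dist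
  cases p with
  | nil => exact absurd rfl huv
  | cons hadj q => exact ⟨_, hadj, (dist_le q).trans_lt (by simp [← hp])⟩

end SimpleGraph

theorem exists_injective_rank_of_lt {V : Type*} [Finite V] (f : V → ℕ) :
    ∃ r : V → ℕ, Function.Injective r ∧ ∀ u w, f u < f w → r u < r w := by
  obtain ⟨n, ⟨e⟩⟩ := Finite.exists_equiv_fin V
  refine ⟨fun u => n * f u + e u, fun u w huw => e.injective (Fin.ext ?_), fun u w hlt => ?_⟩
  · simpa [Nat.mod_eq_of_lt] using congrArg (· % n) huw
  · calc n * f u + e u < n * (f u + 1) := by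
          rw [Nat.mul_succ]; exact Nat.add_lt_add_left (e u).isLt _
      _ ≤ n * f w := Nat.mul_le_mul_left n hlt
      _ ≤ n * f w + e w := Nat.le_add_right _ _

/-- Borodin–Erdős–Rubin–Taylor, first case: if `G` is connected, every vertex `v` has a
list `L v` of size at least `deg v`, and some vertex has a strictly larger list, then `G`
admits a proper `L`-coloring. -/
theorem degree_choosable_of_some_larger_list {V : Type*} [Fintype V]
    (G : SimpleGraph V) [DecidableRel G.Adj]
    (L : V → Finset ℕ)
    (hL : ∀ v, G.degree v ≤ (L v).card)
    (hconn : G.Connected)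
    (hbig : ∃ v, G.degree v < (L v).card) :
    ∃ c : V → ℕ, (∀ v, c v ∈ L v) ∧ ∀ u v, G.Adj u v → c u ≠ c v := by
  obtain ⟨v, hv⟩ := hbig
  obtain ⟨r, hr_inj, hr_lt⟩ := exists_injective_rank_of_lt fun u => Fintype.card V - G.dist u v
  have hblocked : ∀ u, #{w ∈ G.neighborFinset u | r w < r u} < #(L u) := by
    intro u
    by_cases huv : u = v
    · subst huv
      exact (card_filter_le _ _).trans_lt (G.card_neighborFinset_eq_degree u ▸ hv)
    · have hreach := hconn.preconnected u v
      obtain ⟨w, hadj, hw⟩ := hreach.exists_adj_dist_lt huv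
      have hrank : r u < r w := hr_lt u w (by have := hreach.dist_lt_card; omega)
      exact (G.card_filter_neighborFinset_lt_degree hadj hrank.not_gt).trans_le (hL u)
  exact ⟨G.greedyListColoring L r, fun u => (G.greedyListColoring_spec hblocked u).1,
    fun _ _ => G.greedyListColoring_adj_ne (fun _ _ h => hr_inj.ne h.ne) hblocked⟩
end

section
/- Let G be a finite connected graph and L a list assignment with |L(v)| ≥ deg(v) for every vertex v. If some block of G is neither a complete graph nor an odd cycle (i.e., G is not a Gallai tree), then G admits a proper L-coloring. -/
variable {V : Type*}

/-- A set `B` of vertices induces a connected subgraph with no cut vertex. -/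
def NoCutVertexOn (G : SimpleGraph V) (B : Set V) : Prop :=
  (G.induce B).Connected ∧ ∀ v ∈ B, (G.induce (B \ {v})).Preconnected

/-- A block of `G`: a maximal vertex set inducing a connected subgraph without cut
vertices. -/
def IsBlockOn (G : SimpleGraph V) (B : Set V) : Prop :=
  NoCutVertexOn G B ∧ ∀ B' : Set V, B ⊆ B' → NoCutVertexOn G B' → B' = B

/-- The subgraph induced on `B` is a complete graph. -/
def IsCompleteOn (G : SimpleGraph V) (B : Set V) : Prop :=
  ∀ u v : B, u ≠ v → (G.induce B).Adj u v

/-- The subgraph induced on `B` is an odd cycle. -/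
def IsOddCycleOn (G : SimpleGraph V) (B : Set V) : Prop :=
  ∃ n : ℕ, Odd n ∧ Nonempty ((G.induce B) ≃g SimpleGraph.cycleGraph n)

/-!
Colour the vertices outside the block `B` greedily, farthest from a fixed vertex of `B` first,
after giving `B` a colour that occurs in no list: when its turn comes, every vertex has a
neighbour that is still uncoloured or lies in `B`, so its list does not run out. It remains to
colour `B` from the residual lists, each at least as long as the degree inside `B`.

If some vertex of `B` has a spare colour, colour `B` greedily towards it. If two adjacent vertices
`u`, `w` have different residual lists, give `u` a colour missing from the list of `w`, which
creates a spare colour at `w`. Otherwise all residual lists coincide and `B` is regular of degree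
`k`, their common size. For `k = 2`, `B` is a cycle, even by assumption, hence 2-colourable. For
`k ≥ 3`, Lovász's lemma gives a vertex `y` with non-adjacent neighbours `a`, `b` such that
`B - a - b` is connected; colouring `a` and `b` alike creates a spare colour at `y`.
-/

open Finset Function

namespace SimpleGraph

theorem Reachable.exists_adj_dist_lt_s6 {H : SimpleGraph V} {u v : V} (h : H.Reachable u v)
    (hne : u ≠ v) : ∃ w, H.Adj u w ∧ H.dist w v < H.dist u v := by
  obtain ⟨p, hp⟩ := h.exists_walk_length_eq_dist
  cases p with
  | nil => exact absurd rfl hne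
  | cons hadj q => exact ⟨_, hadj, (dist_le q).trans_lt (by simp [← hp])⟩

section ListColoring

variable [Fintype V] [DecidableEq V] {κ : Type*} [DecidableEq κ]
  (G : SimpleGraph V) [DecidableRel G.Adj] (L : V → Finset κ)

def freeColors (S : Finset V) (c : V → κ) (v : V) : Finset κ :=
  L v \ (G.neighborFinset v \ S).image c

def ListExtendable (S : Finset V) (c : V → κ) : Prop :=
  ∃ c' : V → κ, (∀ v ∉ S, c' v = c v) ∧ (∀ v ∈ S, c' v ∈ G.freeColors L S c v) ∧
    ∀ u ∈ S, ∀ v ∈ S, G.Adj u v → c' u ≠ c' v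

variable {G L} {S : Finset V} {c : V → κ} {u v w : V} {α : κ}

theorem mem_freeColors :
    α ∈ G.freeColors L S c v ↔ α ∈ L v ∧ ∀ u, G.Adj v u → u ∉ S → c u ≠ α := by
  simp [freeColors]

theorem card_neighborFinset_inter_le_card_freeColors (h : G.degree v ≤ #(L v)) :
    #(G.neighborFinset v ∩ S) ≤ #(G.freeColors L S c v) := by
  have := card_inter_add_card_sdiff (G.neighborFinset v) S
  have := le_card_sdiff ((G.neighborFinset v \ S).image c) (L v)
  have := card_image_le (s := G.neighborFinset v \ S) (f := c)
  rw [card_neighborFinset_eq_degree] at *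
  unfold freeColors
  omega

theorem freeColors_erase_update_subset (hv : v ∈ S) :
    G.freeColors L (S.erase v) (update c v α) w ⊆ G.freeColors L S c w := by
  intro β
  simp only [mem_freeColors]
  refine fun ⟨hβ, h⟩ => ⟨hβ, fun u hwu huS => ?_⟩
  have huv : u ≠ v := by rintro rfl; exact huS hv
  simpa [update_of_ne huv] using h u hwu (by simp [huS])

theorem freeColors_sdiff_subset (hv : v ∈ S) :
    G.freeColors L S c w \ {α} ⊆ G.freeColors L (S.erase v) (update c v α) w := by
  intro β
  simp only [mem_sdiff, mem_singleton, mem_freeColors, mem_erase, not_and_or, not_not]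
  refine fun ⟨⟨hβ, h⟩, hβα⟩ => ⟨hβ, fun u hwu huS => ?_⟩
  rcases huS with rfl | huS
  · simpa using Ne.symm hβα
  · have huv : u ≠ v := by rintro rfl; exact huS hv
    simpa [update_of_ne huv] using h u hwu huS

theorem notMem_freeColors_erase_update (h : G.Adj w v) :
    α ∉ G.freeColors L (S.erase v) (update c v α) w := by
  simp only [mem_freeColors, not_and, not_forall]
  exact fun _ => ⟨v, h, by simp, by simp⟩

theorem freeColors_erase_update_of_not_adj (hv : v ∈ S) (h : ¬G.Adj w v) :
    G.freeColors L (S.erase v) (update c v α) w = G.freeColors L S c w := by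
  refine (freeColors_erase_update_subset hv).antisymm fun β hβ => ?_
  rw [mem_freeColors] at hβ ⊢
  refine ⟨hβ.1, fun u hwu huS => ?_⟩
  have huv : u ≠ v := by rintro rfl; exact h hwu
  simpa [update_of_ne huv] using hβ.2 u hwu fun hu => huS (mem_erase.2 ⟨huv, hu⟩)

theorem card_neighborFinset_inter_erase (hv : v ∈ S) (h : G.Adj w v) :
    #(G.neighborFinset w ∩ S.erase v) + 1 = #(G.neighborFinset w ∩ S) := by
  rw [inter_erase, card_erase_add_one (by simp [hv, h])]

theorem card_freeColors_add_le (hv : v ∈ S) (w : V) :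
    #(G.freeColors L S c w) + #(G.neighborFinset w ∩ S.erase v) ≤
      #(G.freeColors L (S.erase v) (update c v α) w) + #(G.neighborFinset w ∩ S) := by
  by_cases h : G.Adj w v
  · have := le_card_sdiff {α} (G.freeColors L S c w)
    have := card_le_card (freeColors_sdiff_subset (G := G) (L := L) (c := c) (w := w) (α := α) hv)
    have := card_neighborFinset_inter_erase hv h
    rw [card_singleton] at *
    omega
  · rw [freeColors_erase_update_of_not_adj hv h, inter_erase, erase_eq_of_notMem (by simp [h])]

theorem card_freeColors_add_lt (hv : v ∈ S) (h : G.Adj w v) (hα : α ∉ G.freeColors L S c w) :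
    #(G.freeColors L S c w) + #(G.neighborFinset w ∩ S.erase v) <
      #(G.freeColors L (S.erase v) (update c v α) w) + #(G.neighborFinset w ∩ S) := by
  have := card_le_card (freeColors_sdiff_subset (G := G) (L := L) (c := c) (w := w) (α := α) hv)
  rw [sdiff_singleton_eq_erase, erase_eq_self.2 hα] at this
  have := card_neighborFinset_inter_erase hv h
  omega

theorem listExtendable_empty (c : V → κ) : G.ListExtendable L ∅ c :=
  ⟨c, fun _ _ => rfl, by simp, by simp⟩

theorem ListExtendable.of_erase_update (hv : v ∈ S) (hα : α ∈ G.freeColors L S c v)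
    (h : G.ListExtendable L (S.erase v) (update c v α)) : G.ListExtendable L S c := by
  obtain ⟨c', hoff, hfree, hadj⟩ := h
  have hcv : c' v = α := by simp [hoff v (by simp)]
  refine ⟨c', fun x hx => ?_, fun x hx => ?_, fun x hx y hy hxy => ?_⟩
  · rw [hoff x (by simp [hx]), update_of_ne (by rintro rfl; exact hx hv)]
  · rcases eq_or_ne x v with rfl | hxv
    · rwa [hcv]
    · exact freeColors_erase_update_subset hv (hfree x (mem_erase.2 ⟨hxv, hx⟩))
  · have key : ∀ y ∈ S.erase v, G.Adj y v → c' y ≠ α := fun y hy hyv h =>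
      notMem_freeColors_erase_update hyv (h ▸ hfree y hy)
    rcases eq_or_ne x v with rfl | hxv
    · rw [hcv]; exact (key y (mem_erase.2 ⟨hxy.ne', hy⟩) hxy.symm).symm
    rcases eq_or_ne y v with rfl | hyv
    · rw [hcv]; exact key x (mem_erase.2 ⟨hxv, hx⟩) hxy
    · exact hadj x (mem_erase.2 ⟨hxv, hx⟩) y (mem_erase.2 ⟨hyv, hy⟩) hxy

theorem ListExtendable.exists_listColoring (hL : ∀ v ∉ S, c v ∈ L v)
    (hc : ∀ u v, G.Adj u v → u ∉ S → v ∉ S → c u ≠ c v) (h : G.ListExtendable L S c) :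
    ∃ c' : V → κ, (∀ v, c' v ∈ L v) ∧ ∀ u v, G.Adj u v → c' u ≠ c' v := by
  obtain ⟨c', hoff, hfree, hadj⟩ := h
  have hS : ∀ u ∈ S, ∀ v ∉ S, G.Adj u v → c' u ≠ c' v := fun u hu v hv huv => by
    rw [hoff v hv]
    exact ((mem_freeColors.1 (hfree u hu)).2 v huv hv).symm
  refine ⟨c', fun v => ?_, fun u v huv => ?_⟩
  · by_cases hv : v ∈ S
    · exact (mem_freeColors.1 (hfree v hv)).1
    · exact hoff v hv ▸ hL v hv
  by_cases hu : u ∈ S <;> by_cases hv : v ∈ S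
  · exact hadj u hu v hv huv
  · exact hS u hu v hv huv
  · exact (hS v hv u hu huv.symm).symm
  · rw [hoff u hu, hoff v hv]; exact hc u v huv hu hv

/-- Greedy colouring in order of decreasing rank `r`: when a vertex is coloured, it still has an
uncoloured neighbour of lower rank, so it has a free colour. -/
theorem listExtendable_of_rank (r : V → ℕ)
    (hslack : ∀ w ∈ S, #(G.neighborFinset w ∩ S) ≤ #(G.freeColors L S c w))
    (hrank : ∀ w ∈ S, #(G.neighborFinset w ∩ S) < #(G.freeColors L S c w) ∨
      ∃ u ∈ S, G.Adj w u ∧ r u < r w) :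
    G.ListExtendable L S c := by
  induction S using Finset.strongInduction generalizing c with | H S ih =>
  obtain rfl | hne := S.eq_empty_or_nonempty
  · exact listExtendable_empty c
  obtain ⟨v, hv, hmax⟩ := S.exists_max_image r hne
  obtain ⟨α, hα⟩ : (G.freeColors L S c v).Nonempty := by
    rw [← card_pos]
    rcases hrank v hv with h | ⟨u, hu, hvu, -⟩
    · omega
    · have := card_pos.2 ⟨u, mem_inter.2 ⟨(G.mem_neighborFinset v u).2 hvu, hu⟩⟩
      have := hslack v hv
      omega
  refine .of_erase_update hv hα (ih _ (erase_ssubset hv) (fun w hw => ?_) fun w hw => ?_)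
  · have := card_freeColors_add_le (G := G) (L := L) (c := c) (α := α) hv w
    have := hslack w (mem_of_mem_erase hw)
    omega
  · have := card_freeColors_add_le (G := G) (L := L) (c := c) (α := α) hv w
    rcases hrank w (mem_of_mem_erase hw) with h | ⟨u, hu, hwu, hr⟩
    · left; omega
    · have huv : u ≠ v := by rintro rfl; have := hmax w (mem_of_mem_erase hw); omega
      exact .inr ⟨u, mem_erase.2 ⟨huv, hu⟩, hwu, hr⟩

theorem listExtendable_of_preconnected {y : V} (hS : (G.induce (S : Set V)).Preconnected)
    (hy : y ∈ S) (hslack : ∀ w ∈ S, #(G.neighborFinset w ∩ S) ≤ #(G.freeColors L S c w))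
    (hlt : #(G.neighborFinset y ∩ S) < #(G.freeColors L S c y)) :
    G.ListExtendable L S c := by
  let r (w : V) : ℕ := if hw : w ∈ S then (G.induce (S : Set V)).dist ⟨w, hw⟩ ⟨y, hy⟩ else 0
  refine listExtendable_of_rank r hslack fun w hw => ?_
  obtain rfl | hwy := eq_or_ne w y
  · exact .inl hlt
  obtain ⟨⟨u, hu : u ∈ S⟩, hwu, hdist⟩ :=
    (hS ⟨w, hw⟩ ⟨y, hy⟩).exists_adj_dist_lt_s6 (by simpa using hwy)
  exact .inr ⟨u, hu, hwu, by simpa only [r, dif_pos hu, dif_pos hw] using hdist⟩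

theorem Connected.exists_listColoring_compl [Infinite κ] (hconn : G.Connected)
    (hL : ∀ v, G.degree v ≤ #(L v)) {B : Finset V} (hB : B.Nonempty) :
    ∃ c : V → κ, (∀ v ∉ B, c v ∈ L v) ∧ ∀ u v, G.Adj u v → u ∉ B → v ∉ B → c u ≠ c v := by
  obtain ⟨ν, hν⟩ := Infinite.exists_notMem_finset (univ.biUnion L)
  obtain ⟨b, hb⟩ := hB
  have hfree (w : V) : G.freeColors L Bᶜ (fun _ => ν) w = L w := by
    refine sdiff_eq_self_of_disjoint (Finset.disjoint_left.2 fun α hα hα' => hν ?_)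
    obtain ⟨-, -, rfl⟩ := mem_image.1 hα'
    exact mem_biUnion.2 ⟨w, mem_univ w, hα⟩
  have hslack (w : V) : #(G.neighborFinset w ∩ Bᶜ) ≤ #(L w) :=
    (card_le_card inter_subset_left).trans (hL w)
  obtain ⟨c, -, hcL, hc⟩ := listExtendable_of_rank (S := Bᶜ) (fun w => G.dist w b)
    (fun w _ => (hfree w).symm ▸ hslack w) fun w hw => by
      obtain ⟨u, hwu, hdist⟩ := (hconn.preconnected w b).exists_adj_dist_lt_s6
        (by rintro rfl; simp [hb] at hw)
      by_cases hu : u ∈ Bᶜ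
      · exact .inr ⟨u, hu, hwu, hdist⟩
      · refine .inl ((card_lt_card ⟨inter_subset_left, fun h => hu ?_⟩).trans_le
          ((hL w).trans_eq (by rw [hfree])))
        exact (mem_inter.1 (h ((G.mem_neighborFinset w u).2 hwu))).2
  refine ⟨c, fun v hv => ?_, fun u v huv hu hv => hc u (by simpa) v (by simpa) huv⟩
  simpa [hfree] using hcL v (by simpa)

end ListColoring

section ReachableIn

variable {G : SimpleGraph V} {s t : Set V} {u v w y z : V}

def ReachableIn (G : SimpleGraph V) (s : Set V) (u v : V) : Prop :=
  ∃ (hu : u ∈ s) (hv : v ∈ s), (G.induce s).Reachable ⟨u, hu⟩ ⟨v, hv⟩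

theorem ReachableIn.refl (hu : u ∈ s) : G.ReachableIn s u u := ⟨hu, hu, .rfl⟩

theorem ReachableIn.symm (h : G.ReachableIn s u v) : G.ReachableIn s v u :=
  let ⟨hu, hv, h⟩ := h; ⟨hv, hu, h.symm⟩

theorem ReachableIn.trans (h : G.ReachableIn s u v) (h' : G.ReachableIn s v w) :
    G.ReachableIn s u w :=
  let ⟨hu, _, h⟩ := h; let ⟨_, hw, h'⟩ := h'; ⟨hu, hw, h.trans h'⟩

theorem ReachableIn.mono (hst : s ⊆ t) (h : G.ReachableIn s u v) : G.ReachableIn t u v :=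
  let ⟨hu, hv, h⟩ := h; ⟨hst hu, hst hv, h.map (G.induceHomOfLE hst).toHom⟩

theorem Adj.reachableIn (h : G.Adj u v) (hu : u ∈ s) (hv : v ∈ s) : G.ReachableIn s u v :=
  ⟨hu, hv, Adj.reachable (G := G.induce s) h⟩

theorem preconnected_induce_iff_reachableIn :
    (G.induce s).Preconnected ↔ ∀ u ∈ s, ∀ v ∈ s, G.ReachableIn s u v :=
  ⟨fun h _ hu _ hv => ⟨hu, hv, h _ _⟩, fun h u v => (h u u.2 v v.2).2.2⟩

theorem ReachableIn.exists_boundary_adj {A : Set V} (h : G.ReachableIn s u v) (hu : u ∈ A)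
    (hv : v ∉ A) : ∃ x ∈ s, x ∈ A ∧ ∃ y ∈ s, y ∉ A ∧ G.Adj x y := by
  obtain ⟨hus, hvs, ⟨p⟩⟩ := h
  obtain ⟨d, -, hd₁, hd₂⟩ := p.exists_boundary_dart {x | (x : V) ∈ A} hu hv
  exact ⟨d.fst, d.fst.2, hd₁, d.snd, d.snd.2, hd₂, d.adj⟩

theorem ReachableIn.exists_adj_of_ne (h : G.ReachableIn s u v) (hne : u ≠ v) :
    ∃ w ∈ s, G.Adj u w := by
  obtain ⟨x, -, rfl, w, hw, -, hxw⟩ := h.exists_boundary_adj (A := {u}) rfl hne.symm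
  exact ⟨w, hw, hxw⟩

theorem ReachableIn.eq_of_forall_adj {β : Type*} {f : V → β} (h : G.ReachableIn s u v)
    (hf : ∀ x ∈ s, ∀ y ∈ s, G.Adj x y → f x = f y) : f u = f v := by
  by_contra hne
  obtain ⟨x, hx, hxu, y, hy, hyu, hxy⟩ :=
    h.exists_boundary_adj (A := {x | f x = f u}) rfl (Ne.symm hne)
  exact hyu ((hf x hx y hy hxy).symm.trans hxu)

theorem preconnected_induce_insert (hs : (G.induce s).Preconnected) (hz : z ∈ s)
    (hyz : G.Adj y z) : (G.induce (insert y s)).Preconnected := by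
  rw [Set.insert_eq]
  exact (connected_induce_union (s := {y}) Preconnected.of_subsingleton hs rfl hz hyz).preconnected

end ReachableIn

section Pieces

variable [DecidableEq V] {G : SimpleGraph V} {B H A : Finset V} {a c u v y : V}

/-- `A ⊆ H` is attached to the rest of `H` only through the vertex `c`; the inclusion-minimal
such sets are the end blocks of `H` with their cut vertex removed. -/
structure IsPiece (G : SimpleGraph V) (H : Finset V) (c : V) (A : Finset V) : Prop where
  nonempty : A.Nonempty
  subset : A ⊆ H
  mem : c ∈ H
  notMem : c ∉ A
  adj : ∀ x ∈ A, ∀ y ∈ H, G.Adj x y → y ∈ A ∨ y = c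

theorem IsPiece.reachableIn_sdiff (hH : (G.induce (H : Set V)).Preconnected)
    (hA : G.IsPiece H c A) (hu : u ∈ H) (huA : u ∉ A) : G.ReachableIn (↑H \ ↑A) u c := by
  by_contra hnr
  have hc : c ∈ (↑H \ ↑A : Set V) := ⟨hA.mem, hA.notMem⟩
  obtain ⟨x, hxH, ⟨hxA, hx⟩, y, hyH, hy, hxy⟩ :=
    (preconnected_induce_iff_reachableIn.1 hH u hu c hA.mem).exists_boundary_adj
      (A := {t | t ∉ A ∧ ¬G.ReachableIn (↑H \ ↑A) t c}) (by exact ⟨huA, hnr⟩)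
      fun h => h.2 (.refl hc)
  by_cases hyA : y ∈ A
  · rcases hA.adj y hyA x hxH hxy.symm with h | rfl
    · exact hxA h
    · exact hx (.refl hc)
  · refine hx ((hxy.reachableIn (s := ↑H \ ↑A) ⟨hxH, hxA⟩ ⟨hyH, hyA⟩).trans ?_)
    simpa [hyA] using hy

/-- Whatever the removal of `a` separates from the attachment vertex would be a smaller piece,
attached at `a`. -/
theorem IsPiece.preconnected_erase (hH : (G.induce (H : Set V)).Preconnected)
    (hA : G.IsPiece H c A) (hmin : Minimal (fun A' => ∃ c', G.IsPiece H c' A') A) (ha : a ∈ A) :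
    (G.induce (H.erase a : Set V)).Preconnected := by
  classical
  let A' := (H.erase a).filter fun z => ¬G.ReachableIn ↑(H.erase a) z c
  have hA'A : A' ⊆ A := fun z hz => by
    by_contra hzA
    refine (mem_filter.1 hz).2 ((hA.reachableIn_sdiff hH (mem_of_mem_erase (mem_filter.1 hz).1)
      hzA).mono fun t ht => ?_)
    exact mem_erase.2 ⟨fun h => ht.2 (h ▸ ha), ht.1⟩
  have hA' : A' = ∅ := by
    by_contra hne
    have hpiece : G.IsPiece H a A' :=
      { nonempty := nonempty_iff_ne_empty.2 hne
        subset := fun z hz => mem_of_mem_erase (mem_filter.1 hz).1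
        mem := hA.subset ha
        notMem := fun h => by simp [A'] at h
        adj := fun x hx y hy hxy => by
          refine or_iff_not_imp_right.2 fun hya => mem_filter.2 ⟨mem_erase.2 ⟨hya, hy⟩, ?_⟩
          refine fun hyc => (mem_filter.1 hx).2 ((hxy.reachableIn ?_ ?_).trans hyc)
          · exact mem_coe.2 (mem_filter.1 hx).1
          · exact mem_coe.2 (mem_erase.2 ⟨hya, hy⟩) }
    simpa [A'] using hmin.2 ⟨a, hpiece⟩ hA'A ha
  have hreach : ∀ z ∈ (H.erase a : Set V), G.ReachableIn ↑(H.erase a) z c := fun z hz => by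
    by_contra h
    have : z ∈ A' := mem_filter.2 ⟨hz, h⟩
    simp [hA'] at this
  exact preconnected_induce_iff_reachableIn.2 fun u hu v hv =>
    (hreach u hu).trans (hreach v hv).symm

theorem IsPiece.erase (hA : G.IsPiece H c A) (haA : a ∉ A) (hac : a ≠ c) :
    G.IsPiece (H.erase a) c A where
  nonempty := hA.nonempty
  subset := fun _ hx => mem_erase.2 ⟨fun h => haA (h ▸ hx), hA.subset hx⟩
  mem := mem_erase.2 ⟨hac.symm, hA.mem⟩
  notMem := hA.notMem
  adj := fun x hx y hy => hA.adj x hx y (mem_of_mem_erase hy)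

theorem exists_isPiece_of_not_reachableIn (hc : c ∈ H) (hu : u ∈ H.erase c)
    (hv : v ∈ H.erase c) (h : ¬G.ReachableIn ↑(H.erase c) u v) :
    ∃ A₁ A₂, G.IsPiece H c A₁ ∧ G.IsPiece H c A₂ ∧ ∀ x ∈ A₁, ∀ y ∈ A₂, x ≠ y ∧ ¬G.Adj x y := by
  classical
  have piece (u) (hu : u ∈ H.erase c) :
      G.IsPiece H c ((H.erase c).filter (G.ReachableIn ↑(H.erase c) u)) :=
    { nonempty := ⟨u, mem_filter.2 ⟨hu, .refl hu⟩⟩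
      subset := fun x hx => mem_of_mem_erase (mem_filter.1 hx).1
      mem := hc
      notMem := by simp
      adj := fun x hx y hy hxy => by
        refine or_iff_not_imp_right.2 fun hyc => mem_filter.2 ⟨mem_erase.2 ⟨hyc, hy⟩, ?_⟩
        exact (mem_filter.1 hx).2.trans
          (hxy.reachableIn (mem_coe.2 (mem_filter.1 hx).1) (mem_coe.2 (mem_erase.2 ⟨hyc, hy⟩))) }
  refine ⟨_, _, piece u hu, piece v hv, fun x hx y hy => ?_⟩
  obtain ⟨hxH, hux⟩ := mem_filter.1 hx
  obtain ⟨hyH, hvy⟩ := mem_filter.1 hy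
  refine ⟨fun hxy => h (hux.trans (hxy ▸ hvy.symm)), fun hxy => h ?_⟩
  exact (hux.trans (hxy.reachableIn (mem_coe.2 hxH) (mem_coe.2 hyH))).trans hvy.symm

/-- The vertex is found in a minimal piece inside `A`, which `y` must touch because its
attachment vertex does not cut `B`. -/
theorem IsPiece.exists_adj_preconnected_erase
    (hcut : ∀ v ∈ B, (G.induce (↑B \ {v})).Preconnected) (hHB : H ⊆ B) (hy : y ∈ B)
    (hyH : y ∉ H) (hH : (G.induce (H : Set V)).Preconnected) (hA : G.IsPiece H c A)
    (hout : ∀ x ∈ A, ∀ t ∈ B, G.Adj x t → t ∈ H ∨ t = y) :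
    ∃ a ∈ A, G.Adj y a ∧ (G.induce (H.erase a : Set V)).Preconnected := by
  obtain ⟨A₁, hA₁A, hmin⟩ :=
    exists_minimal_le_of_wellFoundedLT (fun A' => ∃ c', G.IsPiece H c' A') A ⟨c, hA⟩
  obtain ⟨c₁, hA₁⟩ := hmin.1
  obtain ⟨x₀, hx₀⟩ := hA₁.nonempty
  have hc₁y : c₁ ≠ y := fun h => hyH (h ▸ hA₁.mem)
  have hreach : G.ReachableIn (↑B \ {c₁}) x₀ y :=
    preconnected_induce_iff_reachableIn.1 (hcut c₁ (hHB hA₁.mem)) x₀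
      ⟨hHB (hA₁.subset hx₀), fun h => hA₁.notMem (h ▸ hx₀)⟩ y ⟨hy, hc₁y.symm⟩
  obtain ⟨x, -, hxA₁, t, ⟨htB, htc₁⟩, htA₁, hxt⟩ :=
    hreach.exists_boundary_adj (A := ↑A₁) hx₀ fun h => hyH (hA₁.subset h)
  obtain htH | rfl := hout x (hA₁A hxA₁) t htB hxt
  · obtain h | rfl := hA₁.adj x hxA₁ t htH hxt
    exacts [absurd h htA₁, absurd rfl htc₁]
  · exact ⟨x, hA₁A hxA₁, hxt.symm, hA₁.preconnected_erase hH hmin hxA₁⟩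

end Pieces

section Lovasz

variable [DecidableEq V] {G : SimpleGraph V} {B : Finset V}

theorem exists_adj_adj_not_adj_of_forall_preconnected (hB : (G.induce (B : Set V)).Preconnected)
    {x z : V} (hx : x ∈ B) (hz : z ∈ B) (hxz : x ≠ z) (hnadj : ¬G.Adj x z)
    (h3 : ∀ a ∈ B, ∀ b ∈ B, (G.induce (↑(B \ {a, b}) : Set V)).Preconnected) :
    ∃ y a b, y ∈ B ∧ a ∈ B ∧ b ∈ B ∧ G.Adj y a ∧ G.Adj y b ∧ a ≠ b ∧ ¬G.Adj a b ∧
      (G.induce (↑(B \ {a, b}) : Set V)).Preconnected := by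
  obtain ⟨p, hp⟩ := (hB ⟨x, hx⟩ ⟨z, hz⟩).exists_walk_length_eq_dist
  obtain ⟨a, y, b, hay, hyb, hab, hne⟩ := p.exists_adj_adj_not_adj_ne hp
    ((hB _ _).one_lt_dist_of_ne_of_not_adj (by simpa using hxz) hnadj)
  exact ⟨y, a, b, y.2, a.2, b.2, hay.symm, hyb, fun h => hne (Subtype.ext h), hab,
    h3 a a.2 b b.2⟩

/-- The third neighbour of `y` joins it to the rest. -/
theorem preconnected_induce_sdiff_pair [Fintype V] [DecidableRel G.Adj] {y a b : V} (hy : y ∈ B)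
    (hya : G.Adj y a) (hyb : G.Adj y b) (hdeg : 3 ≤ #(G.neighborFinset y ∩ B))
    (hH : (G.induce (((B.erase y).erase a).erase b : Set V)).Preconnected) :
    (G.induce (↑(B \ {a, b}) : Set V)).Preconnected := by
  obtain ⟨z, hz⟩ : ((G.neighborFinset y ∩ B) \ {a, b}).Nonempty := by
    rw [← card_pos]
    have := le_card_sdiff {a, b} (G.neighborFinset y ∩ B)
    have := card_le_two (a := a) (b := b)
    omega
  simp only [mem_sdiff, mem_inter, mem_neighborFinset, mem_insert, mem_singleton, not_or] at hz
  have hsplit : B \ {a, b} = insert y (((B.erase y).erase a).erase b) := by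
    ext t
    by_cases hty : t = y
    · subst hty; simp [hy, hya.ne, hyb.ne]
    · simp [hty]; tauto
  rw [hsplit, coe_insert]
  exact preconnected_induce_insert hH (by simp [hz.1.1.ne', hz.1.2, hz.2.1, hz.2.2]) hz.1.1

/-- `B - y` is connected but has the cut vertex `b₀`; the two neighbours of `y` are taken from
minimal pieces on the two sides of `b₀`. -/
theorem exists_adj_adj_not_adj_of_not_preconnected [Fintype V] [DecidableRel G.Adj]
    (hB : NoCutVertexOn G B) {y b₀ : V} (hy : y ∈ B) (hb₀ : b₀ ∈ B)
    (hdeg : 3 ≤ #(G.neighborFinset y ∩ B))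
    (hsep : ¬(G.induce (↑(B \ {y, b₀}) : Set V)).Preconnected) :
    ∃ a b, a ∈ B ∧ b ∈ B ∧ G.Adj y a ∧ G.Adj y b ∧ a ≠ b ∧ ¬G.Adj a b ∧
      (G.induce (↑(B \ {a, b}) : Set V)).Preconnected := by
  have hH : (G.induce (B.erase y : Set V)).Preconnected := by
    rw [coe_erase]; exact hB.2 y hy
  have hb₀H : b₀ ∈ B.erase y := by
    refine mem_erase.2 ⟨?_, hb₀⟩
    rintro rfl
    rw [insert_eq_of_mem (mem_singleton_self _), sdiff_singleton_eq_erase] at hsep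
    exact hsep hH
  rw [sdiff_insert, sdiff_singleton_eq_erase, erase_right_comm,
    preconnected_induce_iff_reachableIn] at hsep
  push Not at hsep
  obtain ⟨u, hu, v, hv, huv⟩ := hsep
  obtain ⟨Au, Av, hAu, hAv, hsepA⟩ := exists_isPiece_of_not_reachableIn hb₀H hu hv huv
  obtain ⟨a, haAu, hya, hH₁⟩ := hAu.exists_adj_preconnected_erase hB.2 (erase_subset y B) hy
    (notMem_erase y B) hH fun x _ t ht _ => by
      by_cases hty : t = y
      exacts [.inr hty, .inl (mem_erase.2 ⟨hty, ht⟩)]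
  obtain ⟨b, hbAv, hyb, hH₂⟩ := (hAv.erase (fun h => (hsepA a haAu a h).1 rfl)
      fun h => hAu.notMem (h ▸ haAu)).exists_adj_preconnected_erase hB.2
    ((erase_subset _ _).trans (erase_subset y B)) hy (by simp) hH₁ fun x hx t ht hxt => by
      by_cases hty : t = y
      · exact .inr hty
      have hta : t ≠ a := by rintro rfl; exact (hsepA t haAu x hx).2 hxt.symm
      exact .inl (mem_erase.2 ⟨hta, mem_erase.2 ⟨hty, ht⟩⟩)
  obtain ⟨hab, hnab⟩ := hsepA a haAu b hbAv
  exact ⟨a, b, mem_of_mem_erase (hAu.subset haAu), mem_of_mem_erase (hAv.subset hbAv), hya, hyb,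
    hab, hnab, preconnected_induce_sdiff_pair hy hya hyb hdeg hH₂⟩

/-- Lovász's lemma from the proof of Brooks' theorem. -/
theorem exists_adj_adj_not_adj_preconnected_sdiff [Fintype V] [DecidableRel G.Adj]
    (hB : NoCutVertexOn G B) (hdeg : ∀ v ∈ B, 3 ≤ #(G.neighborFinset v ∩ B)) {x z : V}
    (hx : x ∈ B) (hz : z ∈ B) (hxz : x ≠ z) (hnadj : ¬G.Adj x z) :
    ∃ y a b, y ∈ B ∧ a ∈ B ∧ b ∈ B ∧ G.Adj y a ∧ G.Adj y b ∧ a ≠ b ∧ ¬G.Adj a b ∧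
      (G.induce (↑(B \ {a, b}) : Set V)).Preconnected := by
  by_cases h3 : ∀ a ∈ B, ∀ b ∈ B, (G.induce (↑(B \ {a, b}) : Set V)).Preconnected
  · exact exists_adj_adj_not_adj_of_forall_preconnected hB.1.preconnected hx hz hxz hnadj h3
  push Not at h3
  obtain ⟨y, hy, b₀, hb₀, hsep⟩ := h3
  obtain ⟨a, b, h⟩ := exists_adj_adj_not_adj_of_not_preconnected hB hy hb₀ (hdeg y hy) hsep
  exact ⟨y, a, b, hy, h⟩

end Lovasz

section Cycle

theorem cycleGraph_degree_eq_two {n : ℕ} (hn : 3 ≤ n) (i : Fin n) :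
    (cycleGraph n).degree i = 2 := by
  obtain ⟨m, rfl⟩ : ∃ m, n = m + 3 := ⟨n - 3, by omega⟩
  exact cycleGraph_degree_three_le

variable {W : Type*} [Fintype W] {H : SimpleGraph W} [DecidableRel H.Adj]

theorem IsRegularOfDegree.exists_isCycle (hreg : H.IsRegularOfDegree 2) (hconn : H.Connected) :
    ∃ (v : W) (p : H.Walk v v), p.IsCycle := by
  by_contra! h
  obtain ⟨v⟩ := hconn.nonempty
  obtain ⟨w, hw⟩ : (H.neighborFinset v).Nonempty := by
    rw [← card_pos, card_neighborFinset_eq_degree, hreg v]; omega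
  have : Nontrivial W := ⟨v, w, ((H.mem_neighborFinset v w).1 hw).ne⟩
  obtain ⟨u, hu⟩ := IsTree.exists_vert_degree_one_of_nontrivial ⟨hconn, fun v p hp => h v p hp⟩
  simp [hreg u] at hu

/-- A vertex of a cycle already has two neighbours on it, so in a 2-regular graph the support of
a cycle is closed under adjacency. -/
theorem IsRegularOfDegree.mem_support_of_isCycle (hreg : H.IsRegularOfDegree 2)
    (hconn : H.Connected) {v : W} {p : H.Walk v v} (hp : p.IsCycle) (w : W) :
    w ∈ p.support := by
  have hclosed (x) (hx : x ∈ p.support) (y) (hxy : H.Adj x y) : y ∈ p.support := by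
    have heq := Set.eq_of_subset_of_ncard_le (p.toSubgraph.neighborSet_subset x) (by
      rw [hp.ncard_neighborSet_toSubgraph_eq_two hx, Set.ncard_eq_toFinset_card',
        ← neighborFinset_def, card_neighborFinset_eq_degree, hreg x])
    have : p.toSubgraph.Adj x y := by rw [← Subgraph.mem_neighborSet, heq]; exact hxy
    simpa using this.snd_mem
  by_contra hw
  obtain ⟨q⟩ := hconn.preconnected v w
  obtain ⟨d, -, hd₁, hd₂⟩ := q.exists_boundary_dart {x | x ∈ p.support} p.start_mem_support hw
  exact hd₂ (hclosed _ hd₁ _ d.adj)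

theorem IsRegularOfDegree.length_eq_card_of_isCycle (hreg : H.IsRegularOfDegree 2)
    (hconn : H.Connected) {v : W} {p : H.Walk v v} (hp : p.IsCycle) :
    p.length = Fintype.card W := by
  classical
  have htail : p.support.tail.toFinset = univ := eq_univ_of_forall fun w => by
    rw [List.mem_toFinset]
    by_cases hwv : w = v
    · exact hwv ▸ Walk.end_mem_tail_support hp.not_nil
    · have := hreg.mem_support_of_isCycle hconn hp w
      rw [← Walk.cons_tail_support] at this
      exact (List.mem_cons.1 this).resolve_left hwv
  rw [← card_univ, ← htail, List.toFinset_card_of_nodup hp.support_nodup, List.length_tail,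
    Walk.length_support]
  simp

/-- The cycle through all vertices gives a bijective copy of the cycle graph, and a bijective
homomorphism between 2-regular graphs reflects adjacency. -/
theorem IsRegularOfDegree.nonempty_iso_cycleGraph (hreg : H.IsRegularOfDegree 2)
    (hconn : H.Connected) : Nonempty (H ≃g cycleGraph (Fintype.card W)) := by
  classical
  obtain ⟨v, p, hp⟩ := hreg.exists_isCycle hconn
  have hlen := hreg.length_eq_card_of_isCycle hconn hp
  have hn : 3 ≤ Fintype.card W := hlen ▸ hp.three_le_length
  obtain ⟨f⟩ := (cycleGraph_isContained_iff (by omega)).2 ⟨v, p, hp, hlen⟩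
  have hbij : Function.Bijective f :=
    (Fintype.bijective_iff_injective_and_card f).2 ⟨f.injective, by simp⟩
  refine ⟨(RelIso.mk (Equiv.ofBijective f hbij) fun {i j} =>
    ⟨fun hij => ?_, f.toHom.map_adj⟩).symm⟩
  have himage : ((cycleGraph _).neighborFinset i).image f = H.neighborFinset (f i) := by
    refine eq_of_subset_of_card_le (fun x hx => ?_) ?_
    · obtain ⟨k, hk, rfl⟩ := mem_image.1 hx
      exact (H.mem_neighborFinset _ _).2 (f.toHom.map_adj ((mem_neighborFinset _ _ _).1 hk))
    · rw [card_image_of_injOn hbij.1.injOn, card_neighborFinset_eq_degree,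
        card_neighborFinset_eq_degree, hreg, cycleGraph_degree_eq_two hn]
  obtain ⟨k, hk, hkj⟩ := mem_image.1 (himage ▸ (H.mem_neighborFinset _ _).2 hij)
  exact hbij.1 hkj ▸ (mem_neighborFinset _ _ _).1 hk

end Cycle

section Block

variable [Fintype V] [DecidableEq V] {κ : Type*} [DecidableEq κ]
  {G : SimpleGraph V} [DecidableRel G.Adj] {L : V → Finset κ} {B : Finset V} {c : V → κ} {α : κ}

theorem card_neighborFinset_induce (B : Finset V) (v : (B : Set V)) :
    #((G.induce (B : Set V)).neighborFinset v) = #(G.neighborFinset v ∩ B) := by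
  have := map_neighborFinset_induce (G := G) (s := ↑B) v
  rw [toFinset_coe] at this
  rw [← this, card_map]
  convert rfl

theorem two_le_card_neighborFinset_inter (hB : NoCutVertexOn G B) {x z : V} (hx : x ∈ B)
    (hz : z ∈ B) (hxz : x ≠ z) (hnadj : ¬G.Adj x z) : 2 ≤ #(G.neighborFinset x ∩ B) := by
  obtain ⟨w, hw, hxw⟩ :=
    (preconnected_induce_iff_reachableIn.1 hB.1.preconnected x hx z hz).exists_adj_of_ne hxz
  obtain ⟨w', ⟨hw', hw'w⟩, hxw'⟩ :=
    (preconnected_induce_iff_reachableIn.1 (hB.2 w hw) x ⟨hx, hxw.ne⟩ z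
      ⟨hz, by rintro rfl; exact hnadj hxw⟩).exists_adj_of_ne hxz
  rw [← card_pair (Ne.symm hw'w)]
  refine card_le_card fun t ht => ?_
  rcases mem_insert.1 ht with rfl | ht
  · simp [hxw, mem_coe.1 hw]
  · rw [mem_singleton.1 ht]; simp [hxw', mem_coe.1 hw']

theorem listExtendable_of_colorable {T : Finset κ} (hcol : (G.induce (B : Set V)).Colorable #T)
    (hT : ∀ v ∈ B, T ⊆ G.freeColors L B c v) : G.ListExtendable L B c := by
  obtain ⟨col⟩ := hcol
  let e := T.equivFin.symm
  refine ⟨fun v => if hv : v ∈ B then e (col ⟨v, hv⟩) else c v, fun v hv => by simp [hv],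
    fun v hv => by simpa [hv] using hT v hv (e _).2, fun u hu v hv huv h => ?_⟩
  simp only [dif_pos hu, dif_pos hv] at h
  exact col.valid (show (G.induce (B : Set V)).Adj ⟨u, hu⟩ ⟨v, hv⟩ from huv)
    (e.injective (Subtype.ext h))

theorem listExtendable_of_adj_of_notMem
    (hslack : ∀ v ∈ B, #(G.neighborFinset v ∩ B) ≤ #(G.freeColors L B c v))
    (hcut : ∀ v ∈ B, (G.induce (↑B \ {v})).Preconnected) {u w : V} (hu : u ∈ B) (hw : w ∈ B)
    (huw : G.Adj u w) (hα : α ∈ G.freeColors L B c u) (hαw : α ∉ G.freeColors L B c w) :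
    G.ListExtendable L B c := by
  refine .of_erase_update hu hα (listExtendable_of_preconnected (y := w) ?_
    (mem_erase.2 ⟨huw.ne', hw⟩) (fun x hx => ?_) ?_)
  · rw [coe_erase]; exact hcut u hu
  · have := card_freeColors_add_le (G := G) (L := L) (c := c) (α := α) hu x
    have := hslack x (mem_of_mem_erase hx)
    omega
  · have := card_freeColors_add_lt hu huw.symm hαw
    have := hslack w hw
    omega

theorem listExtendable_of_adj_adj_not_adj
    (hslack : ∀ v ∈ B, #(G.neighborFinset v ∩ B) ≤ #(G.freeColors L B c v)) {y a b : V}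
    (hy : y ∈ B) (ha : a ∈ B) (hb : b ∈ B) (hya : G.Adj y a) (hyb : G.Adj y b) (hab : a ≠ b)
    (hnab : ¬G.Adj a b) (hconn : (G.induce (↑(B \ {a, b}) : Set V)).Preconnected)
    (hαa : α ∈ G.freeColors L B c a) (hαb : α ∈ G.freeColors L B c b) :
    G.ListExtendable L B c := by
  have hb' : b ∈ B.erase a := mem_erase.2 ⟨hab.symm, hb⟩
  have hsdiff : B \ {a, b} = (B.erase a).erase b := by
    rw [sdiff_insert, sdiff_singleton_eq_erase, erase_right_comm]
  have hy' : y ∈ (B.erase a).erase b := by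
    rw [← hsdiff]
    simp [hya.ne, hyb.ne, hy]
  refine .of_erase_update ha hαa (.of_erase_update (α := α) hb' ?_ ?_)
  · rwa [freeColors_erase_update_of_not_adj ha fun h => hnab h.symm]
  refine listExtendable_of_preconnected (y := y) (by rwa [← hsdiff]) hy' (fun x hx => ?_) ?_
  · have := card_freeColors_add_le (G := G) (L := L) (c := c) (α := α) ha x
    have := card_freeColors_add_le (G := G) (L := L) (c := update c a α) (α := α) hb' x
    have := hslack x (mem_of_mem_erase (mem_of_mem_erase hx))
    omega
  · have := card_freeColors_add_le (G := G) (L := L) (c := c) (α := α) ha y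
    have := card_freeColors_add_lt hb' hyb
      (notMem_freeColors_erase_update (G := G) (L := L) (S := B) (c := c) (α := α) hya)
    have := hslack y hy
    omega

end Block

end SimpleGraph

open SimpleGraph

theorem NoCutVertexOn.listExtendable [Fintype V] [DecidableEq V] {κ : Type*} [DecidableEq κ]
    {G : SimpleGraph V} [DecidableRel G.Adj] {L : V → Finset κ} {B : Finset V} {c : V → κ}
    (hB : NoCutVertexOn G B) (hK : ¬IsCompleteOn G B) (hC : ¬IsOddCycleOn G B)
    (hslack : ∀ v ∈ B, #(G.neighborFinset v ∩ B) ≤ #(G.freeColors L B c v)) :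
    G.ListExtendable L B c := by
  obtain ⟨x, hx, z, hz, hxz, hnadj⟩ : ∃ x ∈ B, ∃ z ∈ B, x ≠ z ∧ ¬G.Adj x z := by
    simpa [IsCompleteOn] using hK
  by_cases hspare : ∃ y ∈ B, #(G.neighborFinset y ∩ B) < #(G.freeColors L B c y)
  · obtain ⟨y, hy, hlt⟩ := hspare
    exact listExtendable_of_preconnected hB.1.preconnected hy hslack hlt
  by_cases hdiff : ∃ u ∈ B, ∃ w ∈ B, G.Adj u w ∧
      ∃ α ∈ G.freeColors L B c u, α ∉ G.freeColors L B c w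
  · obtain ⟨u, hu, w, hw, huw, α, hα, hαw⟩ := hdiff
    exact listExtendable_of_adj_of_notMem hslack hB.2 hu hw huw hα hαw
  push Not at hspare hdiff
  have hconst : ∀ v ∈ B, G.freeColors L B c v = G.freeColors L B c x := fun v hv =>
    (preconnected_induce_iff_reachableIn.1 hB.1.preconnected v hv x hx).eq_of_forall_adj
      fun u hu w hw huw => Subset.antisymm (hdiff u hu w hw huw) (hdiff w hw u hu huw.symm)
  have hreg : ∀ v ∈ B, #(G.neighborFinset v ∩ B) = #(G.freeColors L B c x) := fun v hv =>
    hconst v hv ▸ (hslack v hv).antisymm (hspare v hv)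
  have h2 := hreg x hx ▸ two_le_card_neighborFinset_inter hB hx hz hxz hnadj
  obtain h2 | h3 : #(G.freeColors L B c x) = 2 ∨ 3 ≤ #(G.freeColors L B c x) := by omega
  · obtain ⟨e⟩ := IsRegularOfDegree.nonempty_iso_cycleGraph (fun v => by
      rw [← card_neighborFinset_eq_degree, card_neighborFinset_induce, hreg v v.2, h2]) hB.1
    have heven : Even (Fintype.card B) := Nat.not_odd_iff_even.1 fun hodd => hC ⟨_, hodd, ⟨e⟩⟩
    refine listExtendable_of_colorable (T := G.freeColors L B c x) ?_
      fun v hv => (hconst v hv).symm.subset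
    rw [h2]
    exact (cycleGraph.bicoloring_of_even _ heven).colorable.of_hom e.toHom
  · obtain ⟨y, a, b, hy, ha, hb, hya, hyb, hab, hnab, hconn⟩ :=
      exists_adj_adj_not_adj_preconnected_sdiff hB (fun v hv => hreg v hv ▸ h3) hx hz hxz hnadj
    obtain ⟨α, hα⟩ := card_pos.1 (show 0 < #(G.freeColors L B c x) by omega)
    exact listExtendable_of_adj_adj_not_adj hslack hy ha hb hya hyb hab hnab hconn
      (hconst a ha ▸ hα) (hconst b hb ▸ hα)

/-- Borodin–Erdős–Rubin–Taylor, second case: if `G` is connected, every list has size at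
least the degree, and some block of `G` is neither complete nor an odd cycle (`G` is not a
Gallai tree), then `G` admits a proper `L`-coloring. -/
theorem degree_choosable_of_not_gallai_tree [Fintype V]
    (G : SimpleGraph V) [DecidableRel G.Adj]
    (L : V → Finset ℕ)
    (hL : ∀ v, G.degree v ≤ (L v).card)
    (hconn : G.Connected)
    (hblock : ∃ B : Set V, IsBlockOn G B ∧ ¬ IsCompleteOn G B ∧ ¬ IsOddCycleOn G B) :
    ∃ c : V → ℕ, (∀ v, c v ∈ L v) ∧ ∀ u v, G.Adj u v → c u ≠ c v := by
  classical
  obtain ⟨B, ⟨hB, -⟩, hK, hC⟩ := hblock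
  rw [← Set.coe_toFinset B] at hB hK hC
  obtain ⟨c, hcL, hc⟩ := hconn.exists_listColoring_compl hL (B := B.toFinset) (by
    obtain ⟨v, hv⟩ := hB.1.nonempty
    exact ⟨v, by simpa using hv⟩)
  exact (hB.listExtendable hK hC fun v _ =>
    card_neighborFinset_inter_le_card_freeColors (hL v)).exists_listColoring hcL hc
end

section
/- Let P ∈ F[X₁,…,Xₙ] be a polynomial over a field F, and suppose the coefficient of the monomial ∏ᵢ Xᵢ^{kᵢ} is nonzero in P and deg(P) = Σᵢ kᵢ. Then for any subsets S₁,…,Sₙ ⊆ F with |Sᵢ| > kᵢ for all i, there exist sᵢ ∈ Sᵢ with P(s₁,…,sₙ) ≠ 0. -/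
/-- Alon's Combinatorial Nullstellensatz: if the coefficient of `∏ Xᵢ^{kᵢ}` in `P` is
nonzero and `deg P = Σ kᵢ`, then for any sets `Sᵢ` with `|Sᵢ| > kᵢ` there is a point of
`∏ Sᵢ` where `P` does not vanish. -/
theorem combinatorial_nullstellensatz {F : Type*} [Field F] {n : ℕ}
    (P : MvPolynomial (Fin n) F) (k : Fin n → ℕ)
    (hcoeff : P.coeff (Finsupp.equivFunOnFinite.symm k) ≠ 0)
    (hdeg : P.totalDegree = ∑ i, k i)
    (S : Fin n → Finset F) (hS : ∀ i, k i < (S i).card) :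
    ∃ s : Fin n → F, (∀ i, s i ∈ S i) ∧ MvPolynomial.eval s P ≠ 0 := by
  refine P.combinatorial_nullstellensatz_exists_eval_nonzero _ hcoeff ?_ S hS
  rw [hdeg, Finsupp.degree_eq_sum]
  rfl
end

section
/- For every ℓ ≥ 1 there exists a plane graph G with 3-facial chromatic index exactly 3ℓ + 1; specifically, the graph obtained from a triangle with a vertex v joined to all three triangle vertices, where each of the three edges incident to v is subdivided into a path of length ℓ, requires 3ℓ + 1 colors in any ℓ-facial edge-coloring. In particular, every ℓ-facial edge-coloring of this graph uses at least 3ℓ + 1 colors because its 3ℓ + 1 edges are pairwise within facial-distance ℓ. -/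
/-- A plane (pseudo)graph, encoded as a combinatorial map: a finite set of darts `D`, a
fixed-point-free involution `α` pairing the two darts of each edge (loops and parallel
edges are allowed), and a rotation permutation `σ` whose orbits are the vertices; the
orbits of `σ * α` are the facial walks. Connectivity plus the Euler relation
`V - E + F = 2` (orbit counts of `σ`, `α`, `σ * α`) force genus 0, i.e. a plane
embedding. -/
structure PlaneMap where
  D : Type
  fD : Fintype D
  σ : Equiv.Perm D
  α : Equiv.Perm D
  αinvol : ∀ d, α (α d) = d
  αfixfree : ∀ d, α d ≠ d
  conn : ∀ d d' : D, d' ∈ MulAction.orbit (Subgroup.closure ({σ, α} : Set (Equiv.Perm D))) d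
  euler : (Nat.card (MulAction.orbitRel.Quotient (Subgroup.zpowers σ) D) : ℤ)
      - (Nat.card (MulAction.orbitRel.Quotient (Subgroup.zpowers α) D) : ℤ)
      + (Nat.card (MulAction.orbitRel.Quotient (Subgroup.zpowers (σ * α)) D) : ℤ) = 2

attribute [instance] PlaneMap.fD

/-- An `ℓ`-facial edge-coloring with `n` colors: a coloring of darts, constant on edges
(`c (α d) = c d`), such that any two *distinct* edges at distance at most `ℓ` along a
facial walk (an orbit of `σ * α`) receive distinct colors. The edge of the dart
`(σ * α) ^ j d` equals the edge of `d` iff it is `d` or `α d`. -/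
def PlaneMap.IsFacialEdgeColoring (M : PlaneMap) (ℓ n : ℕ) (c : M.D → Fin n) : Prop :=
  (∀ d, c (M.α d) = c d) ∧
  ∀ d : M.D, ∀ j ∈ Finset.Icc 1 ℓ,
    ((M.σ * M.α) ^ j) d ≠ d → ((M.σ * M.α) ^ j) d ≠ M.α d →
      c (((M.σ * M.α) ^ j) d) ≠ c d

/-!
The witness is the theta graph `Θ(ℓ, ℓ, ℓ + 1)`: two hubs `u`, `v` joined by internally disjoint
paths of lengths `ℓ`, `ℓ`, `ℓ + 1`. It has `3ℓ` vertices, `3ℓ + 1` edges and three faces, of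
lengths `2ℓ + 1`, `2ℓ`, `2ℓ + 1`, so Euler's relation holds. Each edge borders two of the three
faces, hence any two edges lie on a common face; on a facial walk of length at most `2ℓ + 1` one
of the two edges follows the other within `ℓ` steps. So the `3ℓ + 1` edges pairwise conflict,
while giving every edge its own colour is an `ℓ`-facial colouring.
-/

namespace Equiv.Perm

variable {α β : Type*}

theorem SameCycle.mem_orbit {π : Perm α} {H : Subgroup (Perm α)} (hπ : π ∈ H) {a b : α}
    (h : π.SameCycle a b) : b ∈ MulAction.orbit H a :=
  let ⟨i, hi⟩ := h
  ⟨⟨π ^ i, zpow_mem hπ i⟩, hi⟩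

theorem apply_zpow_apply_eq {π : Perm α} {f : α → β} (hf : ∀ a, f (π a) = f a) (i : ℤ) (a : α) :
    f ((π ^ i) a) = f a := by
  induction i using Int.induction_on generalizing a with
  | zero => rfl
  | succ i ih => rw [zpow_add_one, mul_apply, ih, hf]
  | pred i ih => rw [zpow_sub_one, mul_apply, ih, ← hf, ← mul_apply, mul_inv_cancel, one_apply]

theorem card_orbitRel_quotient_zpowers_eq {π : Perm α} (f : α → β) (s : β → α)
    (hf : ∀ a, f (π a) = f a) (hs : ∀ b, f (s b) = b) (hπ : ∀ a, π.SameCycle a (s (f a))) :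
    Nat.card (MulAction.orbitRel.Quotient (Subgroup.zpowers π) α) = Nat.card β := by
  refine Nat.card_congr (Equiv.ofBijective (Quotient.lift f fun a b hab => ?_) ⟨?_, ?_⟩)
  · obtain ⟨⟨_, i, rfl⟩, rfl⟩ := hab
    exact apply_zpow_apply_eq hf i b
  · refine Quotient.ind₂ fun a b hab => Quotient.sound ?_
    have hab : f b = f a := hab.symm
    exact ((hπ b).trans (hab ▸ (hπ a).symm)).mem_orbit (Subgroup.mem_zpowers π)
  · exact fun b => ⟨Quotient.mk _ (s b), hs b⟩

end Equiv.Perm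

theorem ZMod.exists_add_eq_of_ne {n ℓ : ℕ} [NeZero n] (hn : n ≤ 2 * ℓ + 1) {x y : ZMod n}
    (hxy : x ≠ y) : ∃ j : ℕ, 1 ≤ j ∧ j ≤ ℓ ∧ (x + j = y ∨ y + j = x) := by
  have hk : (y - x).val ≠ 0 := by rwa [ne_eq, ZMod.val_eq_zero, sub_eq_zero, eq_comm]
  have hlt := (y - x).val_lt
  by_cases hkl : (y - x).val ≤ ℓ
  · exact ⟨_, by omega, hkl, .inl (by rw [ZMod.natCast_zmod_val]; ring)⟩
  · refine ⟨n - (y - x).val, by omega, by omega, .inr ?_⟩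
    rw [Nat.cast_sub hlt.le, ZMod.natCast_self, ZMod.natCast_zmod_val]
    ring

theorem PlaneMap.isFacialEdgeColoring_of_injOn_edges (M : PlaneMap) (ℓ n : ℕ)
    (c : M.D → Fin n) (hα : ∀ d, c (M.α d) = c d)
    (hc : ∀ d d', c d' = c d → d' = d ∨ d' = M.α d) : M.IsFacialEdgeColoring ℓ n c :=
  ⟨hα, fun _ _ _ h₁ h₂ he => (hc _ _ he).elim h₁ h₂⟩

namespace Theta

open Equiv

/-- Darts of `Θ(ℓ, ℓ, ℓ + 1)`, listed face by face in facial order, where the paths `P₁, P₂, P₃`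
(of lengths `ℓ, ℓ, ℓ + 1`) run from `u` to `v`: face `A` runs along `P₁` (positions `0, …, ℓ - 1`)
and back along `P₃`, face `B` along `P₂` and back along `P₁`, face `C` along `P₃` and back
along `P₂`. -/
abbrev Dart (ℓ : ℕ) := ZMod (2 * ℓ + 1) ⊕ ZMod (2 * ℓ) ⊕ ZMod (2 * ℓ + 1)

variable {ℓ : ℕ}

def dartA (a : ℕ) : Dart ℓ := .inl a
def dartB (b : ℕ) : Dart ℓ := .inr (.inl b)
def dartC (c : ℕ) : Dart ℓ := .inr (.inr c)

def faceRot : Perm (Dart ℓ) :=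
  (Equiv.addRight 1).sumCongr ((Equiv.addRight 1).sumCongr (Equiv.addRight 1))

def face : Dart ℓ → Fin 3
  | .inl _ => 0
  | .inr (.inl _) => 1
  | .inr (.inr _) => 2

def faceRep : Fin 3 → Dart ℓ
  | 0 => dartA 0
  | 1 => dartB 0
  | 2 => dartC 0

def edgeInvFun : Dart ℓ → Dart ℓ
  | .inl x => if x.val < ℓ then dartB (2 * ℓ - 1 - x.val) else dartC (2 * ℓ - x.val)
  | .inr (.inl x) => if x.val < ℓ then dartC (2 * ℓ - x.val) else dartA (2 * ℓ - 1 - x.val)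
  | .inr (.inr x) => if x.val ≤ ℓ then dartA (2 * ℓ - x.val) else dartB (2 * ℓ - x.val)

/-- Edges are numbered `0, …, 3ℓ` along `P₁`, then `P₂`, then `P₃`. -/
def edge : Dart ℓ → ℕ
  | .inl x => if x.val < ℓ then x.val else 4 * ℓ - x.val
  | .inr (.inl x) => if x.val < ℓ then ℓ + x.val else 2 * ℓ - 1 - x.val
  | .inr (.inr x) => if x.val ≤ ℓ then 2 * ℓ + x.val else 3 * ℓ - x.val

def edgeRep (p : ℕ) : Dart ℓ :=
  if p < ℓ then dartA p else if p < 2 * ℓ then dartB (p - ℓ) else dartC (p - 2 * ℓ)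

/-- The tail of a dart. Vertices are numbered `0 = u, 1, …, ℓ = v` along `P₁`, then the inner
vertices of `P₂` and of `P₃`. -/
def vertex : Dart ℓ → ℕ
  | .inl x => if x.val ≤ ℓ then x.val else 4 * ℓ - x.val
  | .inr (.inl x) => if x.val = 0 then 0 else if x.val < ℓ then ℓ + x.val else 2 * ℓ - x.val
  | .inr (.inr x) => if x.val = 0 then 0 else if x.val ≤ ℓ then 2 * ℓ - 1 + x.val
      else if x.val = ℓ + 1 then ℓ else 3 * ℓ + 1 - x.val

def vertexRep (w : ℕ) : Dart ℓ :=
  if w ≤ ℓ then dartA w else if w < 2 * ℓ then dartB (w - ℓ) else dartC (w + 1 - 2 * ℓ)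

theorem faceRot_pow_inl (j : ℕ) (x : ZMod (2 * ℓ + 1)) :
    (faceRot ^ j) (.inl x : Dart ℓ) = .inl (x + j) := by
  induction j with
  | zero => simp
  | succ j ih => rw [pow_succ', Perm.mul_apply, ih]; simp [faceRot, add_assoc]

theorem faceRot_pow_inr_inl (j : ℕ) (x : ZMod (2 * ℓ)) :
    (faceRot ^ j) (.inr (.inl x) : Dart ℓ) = .inr (.inl (x + j)) := by
  induction j with
  | zero => simp
  | succ j ih => rw [pow_succ', Perm.mul_apply, ih]; simp [faceRot, add_assoc]

theorem faceRot_pow_inr_inr (j : ℕ) (x : ZMod (2 * ℓ + 1)) :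
    (faceRot ^ j) (.inr (.inr x) : Dart ℓ) = .inr (.inr (x + j)) := by
  induction j with
  | zero => simp
  | succ j ih => rw [pow_succ', Perm.mul_apply, ih]; simp [faceRot, add_assoc]

theorem faceRot_dartA (a : ℕ) : faceRot (dartA a : Dart ℓ) = dartA (a + 1) := by
  simp [faceRot, dartA]

theorem faceRot_dartB (b : ℕ) : faceRot (dartB b : Dart ℓ) = dartB (b + 1) := by
  simp [faceRot, dartB]

theorem faceRot_dartC (c : ℕ) : faceRot (dartC c : Dart ℓ) = dartC (c + 1) := by
  simp [faceRot, dartC]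

theorem dartA_two_mul_add_one : (dartA (2 * ℓ + 1) : Dart ℓ) = dartA 0 := by
  simp [dartA]

theorem dartB_two_mul : (dartB (2 * ℓ) : Dart ℓ) = dartB 0 := by
  simp [dartB]

theorem dartC_two_mul_add_one : (dartC (2 * ℓ + 1) : Dart ℓ) = dartC 0 := by
  simp [dartC]

variable {a b c : ℕ}

@[simp] theorem face_dartA : face (dartA a : Dart ℓ) = 0 := rfl
@[simp] theorem face_dartB : face (dartB b : Dart ℓ) = 1 := rfl
@[simp] theorem face_dartC : face (dartC c : Dart ℓ) = 2 := rfl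

theorem edgeInvFun_dartA (ha : a < 2 * ℓ + 1) : edgeInvFun (dartA a : Dart ℓ) =
    if a < ℓ then dartB (2 * ℓ - 1 - a) else dartC (2 * ℓ - a) := by
  rw [dartA, edgeInvFun, ZMod.val_cast_of_lt ha]

theorem edgeInvFun_dartB (hb : b < 2 * ℓ) : edgeInvFun (dartB b : Dart ℓ) =
    if b < ℓ then dartC (2 * ℓ - b) else dartA (2 * ℓ - 1 - b) := by
  rw [dartB, edgeInvFun, ZMod.val_cast_of_lt hb]

theorem edgeInvFun_dartC (hc : c < 2 * ℓ + 1) : edgeInvFun (dartC c : Dart ℓ) =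
    if c ≤ ℓ then dartA (2 * ℓ - c) else dartB (2 * ℓ - c) := by
  rw [dartC, edgeInvFun, ZMod.val_cast_of_lt hc]

theorem edge_dartA (ha : a < 2 * ℓ + 1) :
    edge (dartA a : Dart ℓ) = if a < ℓ then a else 4 * ℓ - a := by
  rw [dartA, edge, ZMod.val_cast_of_lt ha]

theorem edge_dartB (hb : b < 2 * ℓ) :
    edge (dartB b : Dart ℓ) = if b < ℓ then ℓ + b else 2 * ℓ - 1 - b := by
  rw [dartB, edge, ZMod.val_cast_of_lt hb]

theorem edge_dartC (hc : c < 2 * ℓ + 1) :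
    edge (dartC c : Dart ℓ) = if c ≤ ℓ then 2 * ℓ + c else 3 * ℓ - c := by
  rw [dartC, edge, ZMod.val_cast_of_lt hc]

theorem vertex_dartA (ha : a < 2 * ℓ + 1) :
    vertex (dartA a : Dart ℓ) = if a ≤ ℓ then a else 4 * ℓ - a := by
  rw [dartA, vertex, ZMod.val_cast_of_lt ha]

theorem vertex_dartB (hb : b < 2 * ℓ) : vertex (dartB b : Dart ℓ) =
    if b = 0 then 0 else if b < ℓ then ℓ + b else 2 * ℓ - b := by
  rw [dartB, vertex, ZMod.val_cast_of_lt hb]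

theorem vertex_dartC (hc : c < 2 * ℓ + 1) : vertex (dartC c : Dart ℓ) =
    if c = 0 then 0 else if c ≤ ℓ then 2 * ℓ - 1 + c
      else if c = ℓ + 1 then ℓ else 3 * ℓ + 1 - c := by
  rw [dartC, vertex, ZMod.val_cast_of_lt hc]

theorem edge_edgeRep {p : ℕ} (hp : p < 3 * ℓ + 1) : edge (edgeRep p : Dart ℓ) = p := by
  rw [edgeRep]
  split_ifs <;> simp (disch := omega) only [edge_dartA, edge_dartB, edge_dartC] <;>
    split_ifs <;> omega

theorem faceRot_dartA_of_lt (ha : a < 2 * ℓ + 1) :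
    faceRot (dartA a : Dart ℓ) = if a < 2 * ℓ then dartA (a + 1) else dartA 0 := by
  rw [faceRot_dartA]; split_ifs
  · rfl
  · rw [show a + 1 = 2 * ℓ + 1 by omega, dartA_two_mul_add_one]

theorem faceRot_dartB_of_lt (hb : b < 2 * ℓ) :
    faceRot (dartB b : Dart ℓ) = if b + 1 < 2 * ℓ then dartB (b + 1) else dartB 0 := by
  rw [faceRot_dartB]; split_ifs
  · rfl
  · rw [show b + 1 = 2 * ℓ by omega, dartB_two_mul]

theorem faceRot_dartC_of_lt (hc : c < 2 * ℓ + 1) :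
    faceRot (dartC c : Dart ℓ) = if c < 2 * ℓ then dartC (c + 1) else dartC 0 := by
  rw [faceRot_dartC]; split_ifs
  · rfl
  · rw [show c + 1 = 2 * ℓ + 1 by omega, dartC_two_mul_add_one]

theorem face_faceRep (i : Fin 3) : face (faceRep i : Dart ℓ) = i := by
  fin_cases i <;> rfl

theorem face_faceRot (d : Dart ℓ) : face (faceRot d) = face d := by
  rcases d with _ | _ | _ <;> rfl

section

variable [NeZero ℓ]

@[elab_as_elim]
theorem Dart.induction {P : Dart ℓ → Prop} (dartA : ∀ a < 2 * ℓ + 1, P (dartA a))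
    (dartB : ∀ b < 2 * ℓ, P (dartB b)) (dartC : ∀ c < 2 * ℓ + 1, P (dartC c)) (d : Dart ℓ) :
    P d := by
  rcases d with x | x | x
  · simpa [Theta.dartA] using dartA x.val x.val_lt
  · simpa [Theta.dartB] using dartB x.val x.val_lt
  · simpa [Theta.dartC] using dartC x.val x.val_lt

theorem edgeInvFun_involutive : Function.Involutive (edgeInvFun (ℓ := ℓ)) := by
  intro d
  induction d using Dart.induction <;>
  · simp (disch := omega) only [edgeInvFun_dartA, edgeInvFun_dartB, edgeInvFun_dartC]
    split_ifs <;>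
      simp (disch := omega) only [edgeInvFun_dartA, edgeInvFun_dartB, edgeInvFun_dartC] <;>
      split_ifs <;> first | omega | (congr 1; omega)

theorem face_edgeInvFun_ne (d : Dart ℓ) : face (edgeInvFun d) ≠ face d := by
  induction d using Dart.induction <;>
  · simp (disch := omega) only [edgeInvFun_dartA, edgeInvFun_dartB, edgeInvFun_dartC]
    split_ifs <;> simp

theorem edge_edgeInvFun (d : Dart ℓ) : edge (edgeInvFun d) = edge d := by
  induction d using Dart.induction <;>
  · simp (disch := omega) only [edgeInvFun_dartA, edgeInvFun_dartB, edgeInvFun_dartC]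
    split_ifs <;> simp (disch := omega) only [edge_dartA, edge_dartB, edge_dartC] <;>
      split_ifs <;> omega

theorem edge_lt (d : Dart ℓ) : edge d < 3 * ℓ + 1 := by
  induction d using Dart.induction <;>
  · simp (disch := omega) only [edge_dartA, edge_dartB, edge_dartC]
    split_ifs <;> omega

theorem edgeRep_edge (d : Dart ℓ) : edgeRep (edge d) = d ∨ edgeRep (edge d) = edgeInvFun d := by
  induction d using Dart.induction <;>
  · simp (disch := omega) only [edge_dartA, edge_dartB, edge_dartC, edgeInvFun_dartA,
      edgeInvFun_dartB, edgeInvFun_dartC]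
    split_ifs <;> rw [edgeRep] <;> split_ifs <;>
      first | omega | (left; congr 1 <;> omega) | (right; congr 1 <;> omega)

theorem vertex_lt (d : Dart ℓ) : vertex d < 3 * ℓ := by
  have := NeZero.pos ℓ
  induction d using Dart.induction <;>
  · simp (disch := omega) only [vertex_dartA, vertex_dartB, vertex_dartC]
    split_ifs <;> omega

theorem vertex_vertexRep {w : ℕ} (hw : w < 3 * ℓ) : vertex (vertexRep w : Dart ℓ) = w := by
  have := NeZero.pos ℓ
  rw [vertexRep]
  split_ifs <;> simp (disch := omega) only [vertex_dartA, vertex_dartB, vertex_dartC] <;>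
    split_ifs <;> omega

/-- Facial walks are walks: the successor of `d` on its face leaves from the head of `d`. -/
theorem vertex_faceRot (d : Dart ℓ) : vertex (faceRot d) = vertex (edgeInvFun d) := by
  have := NeZero.pos ℓ
  induction d using Dart.induction <;>
  · simp (disch := omega) only [edgeInvFun_dartA, edgeInvFun_dartB, edgeInvFun_dartC,
      faceRot_dartA_of_lt, faceRot_dartB_of_lt, faceRot_dartC_of_lt]
    split_ifs <;> simp (disch := omega) only [vertex_dartA, vertex_dartB, vertex_dartC] <;>
      split_ifs <;> first | contradiction | omega

theorem sameCycle_faceRep_face (d : Dart ℓ) : faceRot.SameCycle (faceRep (face d)) d := by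
  rcases d with x | x | x
  · exact ⟨x.val, by rw [zpow_natCast]; simp [face, faceRep, dartA, faceRot_pow_inl]⟩
  · exact ⟨x.val, by rw [zpow_natCast]; simp [face, faceRep, dartB, faceRot_pow_inr_inl]⟩
  · exact ⟨x.val, by rw [zpow_natCast]; simp [face, faceRep, dartC, faceRot_pow_inr_inr]⟩

theorem exists_faceRot_pow_eq {d d' : Dart ℓ} (hf : face d = face d') (hne : d ≠ d') :
    ∃ j : ℕ, 1 ≤ j ∧ j ≤ ℓ ∧ ((faceRot ^ j) d = d' ∨ (faceRot ^ j) d' = d) := by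
  rcases d with x | x | x <;> rcases d' with y | y | y <;> simp only [face, Fin.reduceEq] at hf
  · obtain ⟨j, hj⟩ := ZMod.exists_add_eq_of_ne le_rfl (ne_of_apply_ne Sum.inl hne)
    exact ⟨j, by simpa [faceRot_pow_inl] using hj⟩
  · obtain ⟨j, hj⟩ := ZMod.exists_add_eq_of_ne (ℓ := ℓ) (by omega)
      (ne_of_apply_ne (Sum.inr ∘ Sum.inl) hne)
    exact ⟨j, by simpa [faceRot_pow_inr_inl] using hj⟩
  · obtain ⟨j, hj⟩ := ZMod.exists_add_eq_of_ne le_rfl (ne_of_apply_ne (Sum.inr ∘ Sum.inr) hne)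
    exact ⟨j, by simpa [faceRot_pow_inr_inr] using hj⟩

def edgeInv : Perm (Dart ℓ) := edgeInvFun_involutive.toPerm

def vertexRot : Perm (Dart ℓ) := faceRot * edgeInv

theorem vertexRot_apply (d : Dart ℓ) : vertexRot d = faceRot (edgeInvFun d) := rfl

theorem vertexRot_mul_edgeInv : vertexRot * edgeInv = (faceRot : Perm (Dart ℓ)) := by
  ext d
  exact congrArg faceRot (edgeInvFun_involutive d)

theorem vertex_vertexRot (d : Dart ℓ) : vertex (vertexRot d) = vertex d := by
  rw [vertexRot_apply, vertex_faceRot, edgeInvFun_involutive]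

theorem vertexRep_vertex (d : Dart ℓ) : vertexRep (vertex d) = d ∨
    vertexRot d = vertexRep (vertex d) ∨ vertexRot (vertexRep (vertex d)) = d := by
  have hℓ := NeZero.pos ℓ
  induction d using Dart.induction with
  | dartA a ha =>
    rw [vertex_dartA ha]
    split_ifs with h
    · exact .inl (by rw [vertexRep, if_pos h])
    · refine .inr (.inl ?_)
      rw [vertexRep, if_neg (by omega), if_neg (by omega), vertexRot_apply, edgeInvFun_dartA ha,
        if_neg (by omega), faceRot_dartC]
      congr 1; omega
  | dartB b hb =>
    rw [vertex_dartB hb]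
    split_ifs with h₀ h
    · refine .inr (.inr ?_)
      rw [vertexRep, if_pos (Nat.zero_le _), vertexRot_apply, edgeInvFun_dartA (by omega),
        if_pos hℓ, faceRot_dartB, h₀, show 2 * ℓ - 1 - 0 + 1 = 2 * ℓ by omega, dartB_two_mul]
    · exact .inl (by rw [vertexRep, if_neg (by omega), if_pos (by omega)]; congr 1; omega)
    · refine .inr (.inl ?_)
      rw [vertexRep, if_pos (by omega), vertexRot_apply, edgeInvFun_dartB hb, if_neg h,
        faceRot_dartA]
      congr 1; omega
  | dartC c hc =>
    rw [vertex_dartC hc]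
    split_ifs with h₀ h h₁
    · refine .inr (.inl ?_)
      rw [vertexRep, if_pos (Nat.zero_le _), vertexRot_apply, h₀, edgeInvFun_dartC (by omega),
        if_pos (Nat.zero_le _), faceRot_dartA, Nat.sub_zero, dartA_two_mul_add_one]
    · exact .inl (by rw [vertexRep, if_neg (by omega), if_neg (by omega)]; congr 1; omega)
    · refine .inr (.inr ?_)
      rw [vertexRep, if_pos le_rfl, vertexRot_apply, edgeInvFun_dartA (by omega),
        if_neg (lt_irrefl ℓ), faceRot_dartC, h₁]
      congr 1; omega
    · refine .inr (.inl ?_)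
      rw [vertexRep, if_neg (by omega), if_pos (by omega), vertexRot_apply, edgeInvFun_dartC hc,
        if_neg h, faceRot_dartB]
      congr 1; omega

theorem sameCycle_vertexRep_vertex (d : Dart ℓ) :
    vertexRot.SameCycle d (vertexRep (vertex d)) := by
  have hσ : ∀ e : Dart ℓ, vertexRot.SameCycle e (vertexRot e) :=
    fun e => Perm.sameCycle_apply_right.2 (.refl _ _)
  rcases vertexRep_vertex d with h | h | h
  · rw [h]
  · exact h ▸ hσ d
  · exact (h ▸ hσ _).symm

theorem sameCycle_edgeRep_edge (d : Dart ℓ) : edgeInv.SameCycle d (edgeRep (edge d)) := by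
  rcases edgeRep_edge d with h | h
  · rw [h]
  · exact h ▸ Perm.sameCycle_apply_right.2 (.refl _ _)

theorem vertex_faceRep (i : Fin 3) : vertex (faceRep i : Dart ℓ) = 0 := by
  have := NeZero.pos ℓ
  fin_cases i <;> simp (disch := omega) [faceRep, vertex_dartA, vertex_dartB, vertex_dartC]

theorem card_orbits_vertexRot :
    Nat.card (MulAction.orbitRel.Quotient (Subgroup.zpowers (vertexRot : Perm (Dart ℓ))) (Dart ℓ)) =
      3 * ℓ := by
  rw [Perm.card_orbitRel_quotient_zpowers_eq (fun d => (⟨vertex d, vertex_lt d⟩ : Fin (3 * ℓ)))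
    (fun w => (vertexRep w : Dart ℓ)) (fun d => Fin.ext (vertex_vertexRot d))
    (fun w => Fin.ext (vertex_vertexRep w.2)) sameCycle_vertexRep_vertex,
    Nat.card_eq_fintype_card, Fintype.card_fin]

theorem card_orbits_edgeInv :
    Nat.card (MulAction.orbitRel.Quotient (Subgroup.zpowers (edgeInv : Perm (Dart ℓ))) (Dart ℓ)) =
      3 * ℓ + 1 := by
  rw [Perm.card_orbitRel_quotient_zpowers_eq (fun d => (⟨edge d, edge_lt d⟩ : Fin (3 * ℓ + 1)))
    (fun p => (edgeRep p : Dart ℓ)) (fun d => Fin.ext (edge_edgeInvFun d))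
    (fun p => Fin.ext (edge_edgeRep p.2)) sameCycle_edgeRep_edge, Nat.card_eq_fintype_card,
    Fintype.card_fin]

theorem card_orbits_faceRot :
    Nat.card (MulAction.orbitRel.Quotient (Subgroup.zpowers (faceRot : Perm (Dart ℓ))) (Dart ℓ)) =
      3 := by
  rw [Perm.card_orbitRel_quotient_zpowers_eq (face : Dart ℓ → Fin 3) faceRep face_faceRot
    face_faceRep (fun d => (sameCycle_faceRep_face d).symm), Nat.card_eq_fintype_card,
    Fintype.card_fin]

theorem mem_orbit_closure_vertexRot_edgeInv (d d' : Dart ℓ) :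
    d' ∈ MulAction.orbit (Subgroup.closure ({vertexRot, edgeInv} : Set (Perm (Dart ℓ)))) d := by
  set H := Subgroup.closure ({vertexRot, edgeInv} : Set (Perm (Dart ℓ)))
  have hσ : (vertexRot : Perm (Dart ℓ)) ∈ H := Subgroup.subset_closure (by simp)
  have hφ : (faceRot : Perm (Dart ℓ)) ∈ H := by
    rw [← vertexRot_mul_edgeInv]
    exact mul_mem hσ (Subgroup.subset_closure (by simp))
  -- every face passes through the hub `vertexRep 0`
  have hmem : ∀ e, e ∈ MulAction.orbit H (vertexRep 0) := fun e => by
    have he : e ∈ MulAction.orbit H (faceRep (face e)) :=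
      (sameCycle_faceRep_face e).mem_orbit hφ
    have hrep : faceRep (face e) ∈ MulAction.orbit H (vertexRep 0) :=
      vertex_faceRep (ℓ := ℓ) (face e) ▸ (sameCycle_vertexRep_vertex _).symm.mem_orbit hσ
    exact MulAction.orbit_eq_iff.2 hrep ▸ he
  exact MulAction.orbit_eq_iff.1
    ((MulAction.orbit_eq_iff.2 (hmem d')).trans (MulAction.orbit_eq_iff.2 (hmem d)).symm)

end

variable (ℓ) in
def thetaMap [NeZero ℓ] : PlaneMap where
  D := Dart ℓ
  fD := inferInstance
  σ := vertexRot
  α := edgeInv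
  αinvol := edgeInvFun_involutive
  αfixfree d h := face_edgeInvFun_ne d (congrArg face h)
  conn := mem_orbit_closure_vertexRot_edgeInv
  euler := by
    rw [vertexRot_mul_edgeInv, card_orbits_vertexRot, card_orbits_edgeInv, card_orbits_faceRot]
    push_cast
    ring

section

variable [NeZero ℓ]

theorem thetaMap_σ_mul_α : (thetaMap ℓ).σ * (thetaMap ℓ).α = faceRot := vertexRot_mul_edgeInv

theorem eq_or_eq_edgeInvFun_of_edge_eq {d d' : Dart ℓ} (h : edge d' = edge d) :
    d' = d ∨ d' = edgeInvFun d := by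
  rcases edgeRep_edge d with hd | hd <;> rcases edgeRep_edge d' with hd' | hd' <;> rw [h] at hd'
  · exact .inl (hd'.symm.trans hd)
  · exact .inr (by rw [← edgeInvFun_involutive d', ← hd', hd])
  · exact .inr (hd'.symm.trans hd)
  · exact .inl (edgeInvFun_involutive.injective (hd'.symm.trans hd))

/-- Each edge borders two distinct faces, and two pairs out of three faces always meet. -/
theorem exists_face_eq (d d' : Dart ℓ) : ∃ e e' : Dart ℓ, (e = d ∨ e = edgeInvFun d) ∧
    (e' = d' ∨ e' = edgeInvFun d') ∧ face e = face e' := by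
  have key : ∀ i j i' j' : Fin 3, j ≠ i → j' ≠ i' → i = i' ∨ i = j' ∨ j = i' ∨ j = j' := by
    decide
  rcases key _ _ _ _ (face_edgeInvFun_ne d) (face_edgeInvFun_ne d') with h | h | h | h
  · exact ⟨_, _, .inl rfl, .inl rfl, h⟩
  · exact ⟨_, _, .inl rfl, .inr rfl, h⟩
  · exact ⟨_, _, .inr rfl, .inl rfl, h⟩
  · exact ⟨_, _, .inr rfl, .inr rfl, h⟩

theorem apply_faceRot_pow_ne {n : ℕ} {c : Dart ℓ → Fin n}
    (hc : (thetaMap ℓ).IsFacialEdgeColoring ℓ n c) {e : Dart ℓ} {j : ℕ} (hj₁ : 1 ≤ j)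
    (hj₂ : j ≤ ℓ) (he : edge ((faceRot ^ j) e) ≠ edge e) : c ((faceRot ^ j) e) ≠ c e := by
  have hφ := hc.2 e j (Finset.mem_Icc.2 ⟨hj₁, hj₂⟩)
  rw [thetaMap_σ_mul_α] at hφ
  exact hφ (fun h => he (congrArg edge h))
    (fun h => he ((congrArg edge h).trans (edge_edgeInvFun e)))

theorem apply_ne_of_edge_ne {n : ℕ} {c : Dart ℓ → Fin n}
    (hc : (thetaMap ℓ).IsFacialEdgeColoring ℓ n c) {d d' : Dart ℓ} (h : edge d ≠ edge d') :
    c d ≠ c d' := by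
  have hmate : ∀ {x y : Dart ℓ}, (x = y ∨ x = edgeInvFun y) → c x = c y ∧ edge x = edge y := by
    rintro x y (rfl | rfl)
    · exact ⟨rfl, rfl⟩
    · exact ⟨hc.1 y, edge_edgeInvFun y⟩
  obtain ⟨e, e', he, he', hf⟩ := exists_face_eq d d'
  obtain ⟨hce, hee⟩ := hmate he
  obtain ⟨hce', hee'⟩ := hmate he'
  rw [← hee, ← hee'] at h
  rw [← hce, ← hce']
  obtain ⟨j, hj₁, hj₂, rfl | rfl⟩ := exists_faceRot_pow_eq hf (ne_of_apply_ne edge h)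
  · exact (apply_faceRot_pow_ne hc hj₁ hj₂ h.symm).symm
  · exact apply_faceRot_pow_ne hc hj₁ hj₂ h

end

end Theta

/-- Tightness of the Facial Edge-Coloring Conjecture: for every `ℓ ≥ 1` there is a plane
graph (namely `K₄` with the three edges at one vertex each subdivided `ℓ - 1` times,
whose `3ℓ + 1` edges are pairwise within facial-distance `ℓ`) whose `ℓ`-facial chromatic
index is exactly `3ℓ + 1`: it admits an `ℓ`-facial edge-coloring with `3ℓ + 1` colors,
and every `ℓ`-facial edge-coloring of it uses at least `3ℓ + 1` colors. -/
theorem exists_plane_graph_facial_index_eq (ℓ : ℕ) (hℓ : 1 ≤ ℓ) :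
    ∃ M : PlaneMap,
      (∃ c : M.D → Fin (3 * ℓ + 1), M.IsFacialEdgeColoring ℓ (3 * ℓ + 1) c) ∧
      (∀ n : ℕ, (∃ c : M.D → Fin n, M.IsFacialEdgeColoring ℓ n c) → 3 * ℓ + 1 ≤ n) := by
  have : NeZero ℓ := ⟨by omega⟩
  refine ⟨Theta.thetaMap ℓ, ⟨fun d => ⟨Theta.edge d, Theta.edge_lt d⟩, ?_⟩, fun n ⟨c, hc⟩ => ?_⟩
  · exact PlaneMap.isFacialEdgeColoring_of_injOn_edges _ _ _ _
      (fun d => Fin.ext (Theta.edge_edgeInvFun d))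
      (fun _ _ h => Theta.eq_or_eq_edgeInvFun_of_edge_eq (congrArg Fin.val h))
  · have hinj : Function.Injective fun p : Fin (3 * ℓ + 1) => c (Theta.edgeRep p) :=
      fun p q h => Fin.ext <| by_contra fun hpq => Theta.apply_ne_of_edge_ne hc
        (by rwa [Theta.edge_edgeRep p.2, Theta.edge_edgeRep q.2]) h
    simpa using Fintype.card_le_of_injective _ hinj
end
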